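/- arXiv:2005.10989 — 6 statements merged into one kernel-verified Lean document; each statement's English description precedes it below -/
import Mathlib

section
/- Let X be a finite set, B = Perm(X), and let G_i and G_j be regular subgroups of B. Then |S(G_j,[G_i])| · |Norm_B(G_i)| = |R(G_i,[G_j])| · |Norm_B(G_j)|, where the cardinalities are of the finite sets of subgroups S(G_j,[G_i]) and R(G_i,[G_j]) and of the normalizer subgroups. -/
open Equiv Pointwise

/-- A subgroup `N ≤ Perm X` is regular if for all `x y : X` there is exactly one
element of `N` sending `x` to `y`. -/
def IsRegularSubgroup {X : Type*} (N : Subgroup (Equiv.Perm X)) : Prop :=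
  ∀ x y : X, ∃! η : N, (η : Equiv.Perm X) x = y

/-- `S(G_j,[G_i])`: regular subgroups of `Norm_B(G_j)` isomorphic to `G_i`. -/
def SOf {X : Type*} (Gj Gi : Subgroup (Equiv.Perm X)) : Set (Subgroup (Equiv.Perm X)) :=
  {M | M ≤ Subgroup.normalizer (Gj : Set (Equiv.Perm X)) ∧ IsRegularSubgroup M ∧ Nonempty (M ≃* Gi)}

/-- `R(G_i,[G_j])`: regular subgroups of `B` isomorphic to `G_j` whose normalizer
contains `G_i`. -/
def ROf {X : Type*} (Gi Gj : Subgroup (Equiv.Perm X)) : Set (Subgroup (Equiv.Perm X)) :=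
  {N | IsRegularSubgroup N ∧ Nonempty (N ≃* Gj) ∧ Gi ≤ Subgroup.normalizer (N : Set (Equiv.Perm X))}

/-!
Let `Perm X` act on its subgroups by conjugation. Regular subgroups are isomorphic iff they are
conjugate, so `S(G_j,[G_i])` is a set of conjugates of `G_i` and `R(G_i,[G_j])` a set of
conjugates of `G_j`. By orbit–stabilizer, `|S(G_j,[G_i])| · |Norm(G_i)|` counts the `g` with
`g G_i g⁻¹ ≤ Norm(G_j)`, and `|R(G_i,[G_j])| · |Norm(G_j)|` counts the `g` with
`G_i ≤ Norm(g G_j g⁻¹) = g Norm(G_j) g⁻¹`. The two conditions are exchanged by `g ↦ g⁻¹`.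
-/

namespace MulAction

theorem card_subtype_smul_mem {G α : Type*} [Group G] [MulAction G α] {b : α} {T : Set α}
    (hT : T ⊆ orbit G b) :
    Nat.card {g : G // g • b ∈ T} = Nat.card T * Nat.card (stabilizer G b) := by
  let e := (orbitProdStabilizerEquivGroup G b).symm
  have he : ∀ g : G, ((e g).1 : α) = g • b := fun _ => rfl
  calc Nat.card {g : G // g • b ∈ T}
      = Nat.card {p : orbit G b × stabilizer G b // (p.1 : α) ∈ T} :=
        Nat.card_congr (e.subtypeEquiv fun g => by rw [he])
    _ = Nat.card ({o : orbit G b // (o : α) ∈ T} × stabilizer G b) :=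
        Nat.card_congr (prodSubtypeFstEquivSubtypeProd (p := fun o : orbit G b => (o : α) ∈ T))
    _ = Nat.card T * Nat.card (stabilizer G b) := by
        rw [Nat.card_prod, Nat.card_congr (subtypeSubtypeEquivSubtype fun h => hT h)]

end MulAction

namespace Subgroup

variable {G : Type*} [Group G]

theorem normalizer_conjAct_smul (g : ConjAct G) (H : Subgroup G) :
    normalizer ((g • H : Subgroup G) : Set G) = g • normalizer (H : Set G) :=
  (map_equiv_normalizer_eq H (MulDistribMulAction.toMulEquiv G g)).symm

theorem mem_stabilizer_conjAct_iff {g : ConjAct G} {H : Subgroup G} :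
    g ∈ MulAction.stabilizer (ConjAct G) H ↔ ConjAct.ofConjAct g ∈ normalizer (H : Set G) :=
  mem_normalizer_iff_map_conj_eq.symm

theorem card_stabilizer_conjAct (H : Subgroup G) :
    Nat.card (MulAction.stabilizer (ConjAct G) H) = Nat.card (normalizer (H : Set G)) :=
  Nat.card_congr (ConjAct.ofConjAct.toEquiv.subtypeEquiv fun _ => mem_stabilizer_conjAct_iff)

end Subgroup

namespace IsRegularSubgroup

variable {X : Type*} {M N : Subgroup (Perm X)}

theorem bijective_apply (hM : IsRegularSubgroup M) (x₀ : X) :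
    Function.Bijective fun m : M => (m : Perm X) x₀ :=
  Function.bijective_iff_existsUnique _ |>.2 (hM x₀)

theorem smul (hM : IsRegularSubgroup M) (g : ConjAct (Perm X)) : IsRegularSubgroup (g • M) := by
  intro x y
  let σ := ConjAct.ofConjAct g
  refine (Subgroup.equivSMul g M).toEquiv.existsUnique_congr_right.1 <|
    (existsUnique_congr fun m => ?_).1 (hM (σ⁻¹ x) (σ⁻¹ y))
  change _ ↔ (σ * m * σ⁻¹) x = y
  rw [Perm.mul_apply, Perm.mul_apply]
  exact Perm.eq_inv_iff_eq

/-- The conjugating permutation is `x ↦ f(m) x₀` where `m` is the element of `M` with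
`m x₀ = x`. -/
theorem exists_smul_eq (hM : IsRegularSubgroup M) (hN : IsRegularSubgroup N) (f : M ≃* N) :
    ∃ g : ConjAct (Perm X), g • M = N := by
  rcases isEmpty_or_nonempty X with _ | ⟨⟨x₀⟩⟩
  · exact ⟨1, Subsingleton.elim _ _⟩
  let eM := Equiv.ofBijective _ (hM.bijective_apply x₀)
  let eN := Equiv.ofBijective _ (hN.bijective_apply x₀)
  let σ : Perm X := (eM.symm.trans f.toEquiv).trans eN
  have hσ : ∀ m : M, σ (eM m) = eN (f m) := fun m => by simp [σ]
  have conj_eq : ∀ m : M, ConjAct.toConjAct σ • (m : Perm X) = f m := by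
    intro m
    rw [ConjAct.toConjAct_smul, mul_inv_eq_iff_eq_mul]
    ext x
    obtain ⟨m', rfl⟩ := eM.surjective x
    change σ (eM (m * m')) = (f m : Perm X) (σ (eM m'))
    rw [hσ, hσ, map_mul]
    rfl
  refine ⟨ConjAct.toConjAct σ, Subgroup.ext fun z => ?_⟩
  rw [Subgroup.mem_pointwise_smul_iff_inv_smul_mem]
  constructor
  · intro hz
    have hfz := conj_eq ⟨_, hz⟩
    rw [smul_inv_smul] at hfz
    exact hfz ▸ (f ⟨_, hz⟩).2
  · intro hz
    obtain ⟨m, hm⟩ := f.surjective ⟨z, hz⟩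
    rw [show z = f m from congrArg Subtype.val hm.symm, ← conj_eq, inv_smul_smul]
    exact m.2

theorem mem_orbit_conjAct_iff (hM : IsRegularSubgroup M) :
    N ∈ MulAction.orbit (ConjAct (Perm X)) M ↔ IsRegularSubgroup N ∧ Nonempty (N ≃* M) := by
  constructor
  · rintro ⟨g, rfl⟩
    exact ⟨hM.smul g, ⟨(Subgroup.equivSMul g M).symm⟩⟩
  · rintro ⟨hN, ⟨f⟩⟩
    exact hM.exists_smul_eq hN f.symm

end IsRegularSubgroup

section ReflectionPrinciple

variable {X : Type*} {Gi Gj : Subgroup (Perm X)}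

theorem sOf_subset_orbit (hGi : IsRegularSubgroup Gi) :
    SOf Gj Gi ⊆ MulAction.orbit (ConjAct (Perm X)) Gi :=
  fun _ hM => hGi.mem_orbit_conjAct_iff.2 hM.2

theorem rOf_subset_orbit (hGj : IsRegularSubgroup Gj) :
    ROf Gi Gj ⊆ MulAction.orbit (ConjAct (Perm X)) Gj :=
  fun _ hN => hGj.mem_orbit_conjAct_iff.2 ⟨hN.1, hN.2.1⟩

theorem smul_mem_sOf_iff (hGi : IsRegularSubgroup Gi) (g : ConjAct (Perm X)) :
    g • Gi ∈ SOf Gj Gi ↔ g • Gi ≤ Subgroup.normalizer (Gj : Set (Perm X)) :=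
  ⟨And.left, fun h => ⟨h, hGi.smul g, ⟨(Subgroup.equivSMul g Gi).symm⟩⟩⟩

theorem smul_mem_rOf_iff (hGj : IsRegularSubgroup Gj) (g : ConjAct (Perm X)) :
    g • Gj ∈ ROf Gi Gj ↔ Gi ≤ g • Subgroup.normalizer (Gj : Set (Perm X)) := by
  rw [← Subgroup.normalizer_conjAct_smul]
  exact ⟨fun h => h.2.2, fun h => ⟨hGj.smul g, ⟨(Subgroup.equivSMul g Gj).symm⟩, h⟩⟩

end ReflectionPrinciple

theorem reflection_principle_general {X : Type*}
    (Gi Gj : Subgroup (Equiv.Perm X))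
    (hGi : IsRegularSubgroup Gi) (hGj : IsRegularSubgroup Gj) :
    (SOf Gj Gi).ncard * Nat.card (Subgroup.normalizer (Gi : Set (Equiv.Perm X)))
      = (ROf Gi Gj).ncard * Nat.card (Subgroup.normalizer (Gj : Set (Equiv.Perm X))) := by
  rw [← Nat.card_coe_set_eq, ← Nat.card_coe_set_eq, ← Subgroup.card_stabilizer_conjAct,
    ← Subgroup.card_stabilizer_conjAct, ← MulAction.card_subtype_smul_mem (sOf_subset_orbit hGi),
    ← MulAction.card_subtype_smul_mem (rOf_subset_orbit hGj)]
  refine Nat.card_congr ((Equiv.inv _).subtypeEquiv fun g => ?_)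
  rw [Equiv.inv_apply, smul_mem_sOf_iff hGi, smul_mem_rOf_iff hGj,
    Subgroup.pointwise_smul_subset_iff]

/-- The reflection principle:
`|S(G_j,[G_i])| ⬝ |Norm_B(G_i)| = |R(G_i,[G_j])| ⬝ |Norm_B(G_j)|`. -/
theorem reflection_principle {X : Type*} [Finite X]
    (Gi Gj : Subgroup (Equiv.Perm X))
    (hGi : IsRegularSubgroup Gi) (hGj : IsRegularSubgroup Gj) :
    (SOf Gj Gi).ncard * Nat.card (Subgroup.normalizer (Gi : Set (Equiv.Perm X)))
      = (ROf Gi Gj).ncard * Nat.card (Subgroup.normalizer (Gj : Set (Equiv.Perm X))) :=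
  reflection_principle_general Gi Gj hGi hGj
end

section
/- For a finite group G, the set H(G) is exactly the conjugation orbit of λ(G) under NHol(G), i.e. H(G) = {β λ(G) β⁻¹ : β ∈ NHol(G)}, and the cardinality of H(G) equals the index [NHol(G) : Hol(G)]. -/
open Equiv Pointwise

/-- The image `λ(G)` of the left regular representation `λ : G → Perm G`. -/
def lamG (G : Type*) [Group G] : Subgroup (Equiv.Perm G) :=
  (MulAction.toPermHom G G).range

/-- The holomorph `Hol(G) = Norm_B(λ(G))`. -/
def Hol (G : Type*) [Group G] : Subgroup (Equiv.Perm G) :=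
  Subgroup.normalizer (lamG G : Set (Equiv.Perm G))

/-- `H(G)`: regular subgroups isomorphic to `G` whose normalizer is `Hol(G)`. -/
def HClass (G : Type*) [Group G] : Set (Subgroup (Equiv.Perm G)) :=
  {N | IsRegularSubgroup N ∧ Nonempty (N ≃* G) ∧ Subgroup.normalizer (N : Set (Equiv.Perm G)) = Hol G}

/-- `S(G)`: regular subgroups isomorphic to `G` contained in `Hol(G)`. -/
def SClass (G : Type*) [Group G] : Set (Subgroup (Equiv.Perm G)) :=
  {N | IsRegularSubgroup N ∧ Nonempty (N ≃* G) ∧ N ≤ Hol G}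

/-- `R(G)`: regular subgroups isomorphic to `G` normalized by `λ(G)`. -/
def RClass (G : Type*) [Group G] : Set (Subgroup (Equiv.Perm G)) :=
  {N | IsRegularSubgroup N ∧ Nonempty (N ≃* G) ∧ lamG G ≤ Subgroup.normalizer (N : Set (Equiv.Perm G))}

/-- `Q(G)`: members of `S(G) ∩ R(G)` normalized by every member of `S(G) ∩ R(G)`. -/
def QClass (G : Type*) [Group G] : Set (Subgroup (Equiv.Perm G)) :=
  {M ∈ SClass G ∩ RClass G | ∀ N ∈ SClass G ∩ RClass G, N ≤ Subgroup.normalizer (M : Set (Equiv.Perm G))}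

/-- Conjugate of a subgroup: `b N b⁻¹`. -/
def conjSub {H : Type*} [Group H] (b : H) (N : Subgroup H) : Subgroup H :=
  Subgroup.map (MulAut.conj b).toMonoidHom N

/-! A regular subgroup `N` of `Perm G` with `φ : G ≃* N` is conjugate to `λ(G)`: the bijection
`β g := φ g 1` satisfies `β λ(g) β⁻¹ = φ g`. Conjugation by `β` carries `Hol(G) = Norm(λ(G))`
to `Norm(N)`, so `Norm(N) = Hol(G)` exactly when `β` normalizes `Hol(G)`. Hence `H(G)` is the
orbit of `λ(G)` under conjugation by `NHol(G)`, whose stabilizer is `Hol(G)`, and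
orbit–stabilizer gives its size. -/

open Subgroup

section Conjugation

variable {P : Type*} [Group P]

lemma conjSub_eq_self_iff {b : P} {N : Subgroup P} : conjSub b N = N ↔ b ∈ normalizer N :=
  mem_normalizer_iff_map_conj_eq.symm

lemma normalizer_conjSub (b : P) (N : Subgroup P) :
    normalizer (conjSub b N : Set P) = conjSub b (normalizer N) :=
  (map_equiv_normalizer_eq N (MulAut.conj b)).symm

theorem ncard_setOf_conjSub_eq_relIndex (H K : Subgroup P) :
    {M | ∃ β ∈ K, conjSub β H = M}.ncard = (normalizer H).relIndex K := by
  let _ : MulAction K (Subgroup P) := MulAction.compHom _ (MulAut.conj.comp K.subtype)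
  have horbit : MulAction.orbit K H = {M | ∃ β ∈ K, conjSub β H = M} := by
    ext M
    simp only [MulAction.mem_orbit_iff, Subtype.exists, Set.mem_ofPred_eq]
    constructor <;> rintro ⟨β, hβ, h⟩ <;> exact ⟨β, hβ, h⟩
  have hstab : MulAction.stabilizer K H = (normalizer H).subgroupOf K := by
    ext β
    rw [MulAction.mem_stabilizer_iff, mem_subgroupOf, ← conjSub_eq_self_iff]
    rfl
  rw [← horbit, ← MulAction.index_stabilizer, hstab]
  rfl

end Conjugation

section Regular

variable {X : Type*}

lemma isRegularSubgroup_iff_bijective {N : Subgroup (Perm X)} :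
    IsRegularSubgroup N ↔ ∀ x, Function.Bijective fun η : N => (η : Perm X) x :=
  forall_congr' fun _ => (Function.bijective_iff_existsUnique _).symm

lemma IsRegularSubgroup.conjSub {N : Subgroup (Perm X)} (hN : IsRegularSubgroup N) (b : Perm X) :
    IsRegularSubgroup (_root_.conjSub b N) := by
  rw [isRegularSubgroup_iff_bijective] at hN ⊢
  intro x
  let e : N ≃* _root_.conjSub b N := MulEquiv.subgroupMap (MulAut.conj b) N
  have : (fun ζ : _root_.conjSub b N => (ζ : Perm X) x) =
      b ∘ (fun η : N => (η : Perm X) (b⁻¹ x)) ∘ e.symm := by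
    ext ζ
    obtain ⟨η, rfl⟩ := e.surjective ζ
    simp only [Function.comp_apply, MulEquiv.symm_apply_apply]
    rfl
  rw [this]
  exact b.bijective.comp ((hN _).comp e.symm.bijective)

end Regular

section Holomorph

variable {G : Type*} [Group G]

variable (G) in
lemma isRegularSubgroup_lamG : IsRegularSubgroup (lamG G) := by
  rw [isRegularSubgroup_iff_bijective]
  intro x
  have : (fun η : lamG G => (η : Perm G) x) =
      (· * x) ∘ (Perm.subgroupOfMulAction G G).symm := by
    ext η
    obtain ⟨g, rfl⟩ := (Perm.subgroupOfMulAction G G).surjective η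
    simp only [Function.comp_apply, MulEquiv.symm_apply_apply]
    rfl
  rw [this]
  exact (Group.mulRight_bijective x).comp (MulEquiv.bijective _)

lemma exists_conjSub_lamG_eq {N : Subgroup (Perm G)} (hN : IsRegularSubgroup N) (φ : N ≃* G) :
    ∃ β : Perm G, conjSub β (lamG G) = N := by
  rw [isRegularSubgroup_iff_bijective] at hN
  let β : Perm G :=
    Equiv.ofBijective (fun g => (φ.symm g : Perm G) 1) ((hN 1).comp φ.symm.bijective)
  have hβ_mul (g h : G) : β (g * h) = (φ.symm g : Perm G) (β h) := by
    simp only [β, Equiv.ofBijective_apply, map_mul, coe_mul, Perm.mul_apply]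
  have hβ : (MulAut.conj β).toMonoidHom.comp (MulAction.toPermHom G G) =
      N.subtype.comp φ.symm.toMonoidHom := by
    ext g x
    obtain ⟨h, rfl⟩ := β.surjective x
    simp [MulAut.conj_apply, hβ_mul]
  refine ⟨β, ?_⟩
  rw [conjSub, lamG, ← MonoidHom.range_comp, hβ, MonoidHom.range_comp,
    MonoidHom.range_eq_top.mpr φ.symm.surjective, ← MonoidHom.range_eq_map, range_subtype]

variable (G) in
theorem HClass_eq_setOf_conjSub :
    HClass G = {N | ∃ β ∈ normalizer (Hol G : Set (Perm G)), conjSub β (lamG G) = N} := by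
  ext N
  constructor
  · rintro ⟨hN, ⟨φ⟩, hnorm⟩
    obtain ⟨β, hβ⟩ := exists_conjSub_lamG_eq hN φ
    have hHol := normalizer_conjSub β (lamG G)
    rw [hβ, hnorm] at hHol
    exact ⟨β, conjSub_eq_self_iff.mp hHol.symm, hβ⟩
  · rintro ⟨β, hβ, rfl⟩
    refine ⟨(isRegularSubgroup_lamG G).conjSub β, ⟨?_⟩, ?_⟩
    · exact (MulEquiv.subgroupMap (MulAut.conj β) (lamG G)).symm.trans
        (Perm.subgroupOfMulAction G G).symm
    · rw [normalizer_conjSub]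
      exact conjSub_eq_self_iff.mpr hβ

end Holomorph

theorem HClass_eq_orbit_NHol_general (G : Type*) [Group G] :
    HClass G = {N | ∃ β ∈ Subgroup.normalizer (Hol G : Set (Equiv.Perm G)), conjSub β (lamG G) = N} ∧
      (HClass G).ncard = (Hol G).relIndex (Subgroup.normalizer (Hol G : Set (Equiv.Perm G))) := by
  rw [HClass_eq_setOf_conjSub]
  exact ⟨rfl, ncard_setOf_conjSub_eq_relIndex _ _⟩

/-- `H(G)` is the conjugation orbit of `λ(G)` under `NHol(G) = Norm_B(Hol(G))`, and
`|H(G)|` is the index `[NHol(G) : Hol(G)]`. -/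
theorem HClass_eq_orbit_NHol (G : Type*) [Group G] [Finite G] :
    HClass G = {N | ∃ β ∈ Subgroup.normalizer (Hol G : Set (Equiv.Perm G)), conjSub β (lamG G) = N} ∧
      (HClass G).ncard = (Hol G).relIndex (Subgroup.normalizer (Hol G : Set (Equiv.Perm G))) :=
  HClass_eq_orbit_NHol_general G
end

section
/- Let G be a finite group, X ⊆ S(G) ∩ R(G), and let P = {β₁, …, β_m} ⊆ B be such that the map β_i ↦ β_i λ(G) β_i⁻¹ is a bijection from P onto X. Suppose P is conj-closed: for all i, j there exists k with β_i β_j λ(G) β_j⁻¹ β_i⁻¹ = β_k λ(G) β_k⁻¹. Then all members of X mutually normalize each other: for every N, M ∈ X one has N ≤ Norm_B(M). -/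
open Equiv Pointwise

section conjSub

variable {H : Type*} [Group H]

lemma conjSub_mul (a b : H) (N : Subgroup H) :
    conjSub (a * b) N = conjSub a (conjSub b N) := by
  simp only [conjSub, Subgroup.map_map, map_mul]
  rfl

lemma conjSub_injective (b : H) : Function.Injective (conjSub b) :=
  Subgroup.map_injective (MulAut.conj b).injective

lemma conjSub_le_normalizer_conjSub {N M : Subgroup H} (b : H)
    (h : N ≤ Subgroup.normalizer (M : Set H)) :
    conjSub b N ≤ Subgroup.normalizer (conjSub b M : Set H) :=
  (Subgroup.map_mono h).trans (Subgroup.le_normalizer_map _)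

lemma surjOn_conjSub_of_mapsTo {X : Set (Subgroup H)} (hX : X.Finite) {b : H}
    (h : Set.MapsTo (conjSub b) X X) : Set.SurjOn (conjSub b) X X :=
  ((hX.injOn_iff_bijOn_of_mapsTo h).mp (conjSub_injective b).injOn).surjOn

end conjSub

theorem mutually_normalizing_of_conjClosed_general (G : Type*) [Group G]
    (X : Set (Subgroup (Equiv.Perm G))) (hX : X ⊆ SClass G ∩ RClass G)
    (m : ℕ) (β : Fin m → Equiv.Perm G)
    (hmem : ∀ i, conjSub (β i) (lamG G) ∈ X)
    (hsurj : ∀ N ∈ X, ∃ i, conjSub (β i) (lamG G) = N)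
    (hcc : ∀ i j, ∃ k, conjSub (β i * β j) (lamG G) = conjSub (β k) (lamG G)) :
    ∀ N ∈ X, ∀ M ∈ X, N ≤ Subgroup.normalizer (M : Set (Equiv.Perm G)) := by
  have hXfin : X.Finite :=
    (Set.finite_range fun i => conjSub (β i) (lamG G)).subset fun N hN => hsurj N hN
  have hmaps : ∀ i, Set.MapsTo (conjSub (β i)) X X := by
    rintro i _ hK
    obtain ⟨j, rfl⟩ := hsurj _ hK
    obtain ⟨k, hk⟩ := hcc i j
    rw [← conjSub_mul, hk]
    exact hmem k
  rintro N hN M hM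
  obtain ⟨i, rfl⟩ := hsurj N hN
  obtain ⟨M', hM', rfl⟩ := surjOn_conjSub_of_mapsTo hXfin (hmaps i) hM
  exact conjSub_le_normalizer_conjSub (β i) (hX hM').2.2.2

/-- If `X ⊆ S(G) ∩ R(G)` is parameterized by a conj-closed set `P = {β₁, …, β_m}`, then
the members of `X` mutually normalize each other. -/
theorem mutually_normalizing_of_conjClosed (G : Type*) [Group G] [Finite G]
    (X : Set (Subgroup (Equiv.Perm G))) (hX : X ⊆ SClass G ∩ RClass G)
    (m : ℕ) (β : Fin m → Equiv.Perm G)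
    (hmem : ∀ i, conjSub (β i) (lamG G) ∈ X)
    (hinj : Function.Injective fun i => conjSub (β i) (lamG G))
    (hsurj : ∀ N ∈ X, ∃ i, conjSub (β i) (lamG G) = N)
    (hcc : ∀ i j, ∃ k, conjSub (β i * β j) (lamG G) = conjSub (β k) (lamG G)) :
    ∀ N ∈ X, ∀ M ∈ X, N ≤ Subgroup.normalizer (M : Set (Equiv.Perm G)) :=
  mutually_normalizing_of_conjClosed_general G X hX m β hmem hsurj hcc
end

section
/- Let p be a prime and n ≥ 1 with p odd or n ≥ 3, let m = ⌊n/2⌋ and u = 1 + p^{n−m} ∈ ℤ/p^nℤ. Then for every natural number e, the permutation of ℤ/p^nℤ given by x ↦ u^e · x + 1 has order p^n in Perm(ℤ/p^nℤ). -/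
/-- `N` odd implies `N ∣ 0+1+⋯+(N-1)`. -/
lemma odd_dvd_sum_range (N : ℕ) (hN : Odd N) : N ∣ ∑ j ∈ Finset.range N, j := by
  obtain ⟨s, hs⟩ := hN
  have h2 : (∑ j ∈ Finset.range N, j) * 2 = N * (N - 1) := Finset.sum_range_id_mul_two N
  refine ⟨s, Nat.eq_of_mul_eq_mul_right two_pos ?_⟩
  rw [h2, hs]
  have h : 2 * s + 1 - 1 = 2 * s := by omega
  rw [h]; ring

lemma sum_range_two_pow (k : ℕ) (hk : 1 ≤ k) :
    ∑ j ∈ Finset.range (2 ^ k), j = 2 ^ (k - 1) * (2 ^ k - 1) := by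
  have h2 : (∑ j ∈ Finset.range (2 ^ k), j) * 2 = 2 ^ k * (2 ^ k - 1) :=
    Finset.sum_range_id_mul_two _
  have hk' : 2 ^ (k - 1) * 2 = 2 ^ k := by
    rw [← pow_succ]; congr 1; omega
  refine Nat.eq_of_mul_eq_mul_right two_pos ?_
  rw [h2]
  calc 2 ^ k * (2 ^ k - 1) = (2 ^ (k - 1) * 2) * (2 ^ k - 1) := by rw [hk']
    _ = 2 ^ (k - 1) * (2 ^ k - 1) * 2 := by ring

/-- For `u = 1 + p^(n-m)` with `m = ⌊n/2⌋` (where `p` is odd, or `p = 2` and `n ≥ 3`),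
the permutation of `ℤ/p^nℤ` given by `x ↦ u^e ⬝ x + 1` has order `p^n`. -/
theorem order_of_affine_perm (p n : ℕ) (hp : p.Prime) (hn : 1 ≤ n)
    (hcase : Odd p ∨ (p = 2 ∧ 3 ≤ n))
    (m : ℕ) (hm : m = n / 2) (e : ℕ) :
    ∀ π : Equiv.Perm (ZMod (p ^ n)),
      (∀ x : ZMod (p ^ n), π x = (1 + (p : ZMod (p ^ n)) ^ (n - m)) ^ e * x + 1) →
      orderOf π = p ^ n := by
  intro π hπ
  haveI : Fact p.Prime := ⟨hp⟩
  set q : ZMod (p ^ n) := (p : ZMod (p ^ n)) ^ (n - m) with hq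
  clear_value q
  have hnm1 : 1 ≤ n - m := by omega
  have hnm2 : n ≤ 2 * (n - m) := by omega
  -- q * q = 0
  have hq2 : q * q = 0 := by
    have h : q * q = ((p ^ (2 * (n - m)) : ℕ) : ZMod (p ^ n)) := by
      rw [hq]; push_cast; ring
    rw [h, ZMod.natCast_eq_zero_iff]
    exact pow_dvd_pow p hnm2
  -- (1+q)^j = 1 + j*q
  have hpow : ∀ j : ℕ, (1 + q) ^ j = 1 + (j : ZMod (p ^ n)) * q := by
    intro j
    induction j with
    | zero => simp
    | succ j ih =>
      rw [pow_succ, ih]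
      push_cast
      linear_combination (j : ZMod (p ^ n)) * hq2
  -- iterate formula
  have hiter : ∀ (k : ℕ) (x : ZMod (p ^ n)), (π ^ k) x =
      (1 + ((e * k : ℕ) : ZMod (p ^ n)) * q) * x +
        (((k : ℕ) : ZMod (p ^ n)) +
          ((e * ∑ j ∈ Finset.range k, j : ℕ) : ZMod (p ^ n)) * q) := by
    intro k
    induction k with
    | zero => intro x; simp
    | succ k ih =>
      intro x
      have h1 : (π ^ (k + 1)) x = (π ^ k) (π x) := by rw [pow_succ]; rfl
      rw [h1, ih, hπ x, hpow e, Finset.sum_range_succ]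
      push_cast
      linear_combination ((e : ZMod (p ^ n)) ^ 2 * (k : ZMod (p ^ n)) * x) * hq2
  -- divisibility facts
  have hTn : p ^ n ∣ (e * ∑ j ∈ Finset.range (p ^ n), j) * p ^ (n - m) := by
    rcases hcase with hodd | ⟨hp2, hn3⟩
    · have h := odd_dvd_sum_range (p ^ n) (hodd.pow)
      exact Dvd.dvd.mul_right (Dvd.dvd.mul_left h e) _
    · subst hp2
      rw [sum_range_two_pow n hn]
      have h : (2:ℕ) ^ n ∣ 2 ^ (n - 1) * 2 ^ (n - m) := by
        rw [← pow_add]; exact pow_dvd_pow 2 (by omega)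
      refine h.trans (mul_dvd_mul ?_ dvd_rfl)
      exact Dvd.dvd.mul_left (dvd_mul_right _ _) e
  have hTn1 : p ^ n ∣ (e * ∑ j ∈ Finset.range (p ^ (n - 1)), j) * p ^ (n - m) := by
    rcases hcase with hodd | ⟨hp2, hn3⟩
    · have h1 := odd_dvd_sum_range (p ^ (n - 1)) (hodd.pow)
      have h2 : p ^ (n - 1) * p ^ (n - m) ∣
          (e * ∑ j ∈ Finset.range (p ^ (n - 1)), j) * p ^ (n - m) :=
        mul_dvd_mul (Dvd.dvd.mul_left h1 e) dvd_rfl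
      refine dvd_trans ?_ h2
      rw [← pow_add]; exact pow_dvd_pow p (by omega)
    · subst hp2
      rw [sum_range_two_pow (n - 1) (by omega)]
      have h : (2:ℕ) ^ n ∣ 2 ^ (n - 1 - 1) * 2 ^ (n - m) := by
        rw [← pow_add]; exact pow_dvd_pow 2 (by omega)
      refine h.trans (mul_dvd_mul ?_ dvd_rfl)
      exact Dvd.dvd.mul_left (dvd_mul_right _ _) e
  -- π ^ (p ^ n) = 1
  have hfin : π ^ (p ^ n) = 1 := by
    ext x
    rw [hiter (p ^ n) x]
    have h1 : ((p ^ n : ℕ) : ZMod (p ^ n)) = 0 := ZMod.natCast_self _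
    have h2 : ((e * p ^ n : ℕ) : ZMod (p ^ n)) = 0 := by
      rw [Nat.cast_mul, h1, mul_zero]
    have h3 : ((e * ∑ j ∈ Finset.range (p ^ n), j : ℕ) : ZMod (p ^ n)) * q = 0 := by
      have h : ((e * ∑ j ∈ Finset.range (p ^ n), j : ℕ) : ZMod (p ^ n)) * q =
          (((e * ∑ j ∈ Finset.range (p ^ n), j) * p ^ (n - m) : ℕ) : ZMod (p ^ n)) := by
        rw [hq]; push_cast; ring
      rw [h, ZMod.natCast_eq_zero_iff]
      exact hTn
    rw [h2, h1, h3]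
    simp
  -- π ^ (p ^ (n-1)) ≠ 1
  have hnot : π ^ (p ^ (n - 1)) ≠ 1 := by
    intro hcon
    have h0 : (π ^ (p ^ (n - 1))) (0 : ZMod (p ^ n)) = 0 := by rw [hcon]; rfl
    rw [hiter (p ^ (n - 1)) 0] at h0
    have h3 : ((e * ∑ j ∈ Finset.range (p ^ (n - 1)), j : ℕ) : ZMod (p ^ n)) * q = 0 := by
      have h : ((e * ∑ j ∈ Finset.range (p ^ (n - 1)), j : ℕ) : ZMod (p ^ n)) * q =
          (((e * ∑ j ∈ Finset.range (p ^ (n - 1)), j) * p ^ (n - m) : ℕ) : ZMod (p ^ n)) := by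
        rw [hq]; push_cast; ring
      rw [h, ZMod.natCast_eq_zero_iff]
      exact hTn1
    rw [h3, mul_zero, zero_add, add_zero] at h0
    rw [ZMod.natCast_eq_zero_iff] at h0
    have hle := Nat.le_of_dvd (pow_pos hp.pos (n - 1)) h0
    have hlt : p ^ (n - 1) < p ^ n := Nat.pow_lt_pow_right hp.one_lt (by omega)
    exact absurd hle (not_le.mpr hlt)
  have key := orderOf_eq_prime_pow (p := p) (n := n - 1) (x := π) hnot (by
    rwa [show n - 1 + 1 = n by omega])
  rwa [show n - 1 + 1 = n by omega] at key
end

section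
/- Let p be an odd prime, n ≥ 1, m = ⌊n/2⌋, u = 1 + p^{n−m} ∈ ℤ/p^nℤ, and let G = ℤ/p^nℤ with λ : G → B = Perm(G) the (additive) left regular representation λ(g)(x) = g + x. For e ∈ ℕ let τ_e ∈ B be the permutation x ↦ u^e·x + 1. Then S(G) ∩ R(G) = { ⟨τ_e⟩ : 0 ≤ e < p^m }, and the map e ↦ ⟨τ_e⟩ is injective on {0, …, p^m − 1}; in particular |S(G) ∩ R(G)| = p^m. -/
open Equiv Pointwise

/-- The left regular representation of an additive group `A`, `λ(g)(x) = g + x`,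
as a monoid homomorphism `Multiplicative A →* Perm A`. -/
def addLamHom (A : Type*) [AddGroup A] : Multiplicative A →* Equiv.Perm A where
  toFun a := Equiv.addLeft (Multiplicative.toAdd a)
  map_one' := by ext x; simp
  map_mul' a b := by ext x; simp [Equiv.Perm.mul_apply, add_assoc]

/-- The image `λ(A)` of the left regular representation. -/
def lamA (A : Type*) [AddGroup A] : Subgroup (Equiv.Perm A) := (addLamHom A).range

/-- The holomorph `Hol(A) = Norm_B(λ(A))` of an additive group `A`. -/
def HolA (A : Type*) [AddGroup A] : Subgroup (Equiv.Perm A) := Subgroup.normalizer (lamA A : Set (Equiv.Perm A))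

/-- `S(G)` for `G = ℤ/pⁿℤ`: regular cyclic subgroups of order `pⁿ` inside `Hol(G)`.
(Here `N ≅ G` means `N` is cyclic of order `pⁿ`.) -/
def SA (p n : ℕ) : Set (Subgroup (Equiv.Perm (ZMod (p ^ n)))) :=
  {N | IsRegularSubgroup N ∧ IsCyclic N ∧ Nat.card N = p ^ n ∧ N ≤ HolA (ZMod (p ^ n))}

/-- `R(G)` for `G = ℤ/pⁿℤ`: regular cyclic subgroups of order `pⁿ` normalized by `λ(G)`. -/
def RA (p n : ℕ) : Set (Subgroup (Equiv.Perm (ZMod (p ^ n)))) :=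
  {N | IsRegularSubgroup N ∧ IsCyclic N ∧ Nat.card N = p ^ n ∧
    lamA (ZMod (p ^ n)) ≤ Subgroup.normalizer (N : Set (Equiv.Perm (ZMod (p ^ n))))}

/-!
Put `c = p ^ (n - m)`, so that `c * c = 0` and `τ_e x = (1 + e c) x + 1`. For any square-zero
`ε` in a ring where `2` is invertible, `x ↦ (1 + ε) x + 1` extends to an injective one-parameter
group `s ↦ (x ↦ (1 + s ε) x + s + ε s (s - 1) / 2)` of affine maps. Its elements have no fixed
points unless `s = 0`, so it is regular; it lies in `Hol(G)` because it is affine; and `λ(t)`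
conjugates the element with parameter `s` to the one with parameter `s (1 - ε t)`. Hence
`⟨τ_e⟩ ∈ S(G) ∩ R(G)`.

Conversely, elements of `Hol(G)` are affine. If `N ∈ S(G) ∩ R(G)` and `ρ x = a x + 1` is the
element of `N` with `ρ 0 = 1`, then `ρ` commutes with `λ(1) ρ λ(1)⁻¹ ∈ N` because `N` is
cyclic, which forces `(a - 1)² = 0`, i.e. `a = 1 + c w`, i.e. `ρ = τ_e` with
`e ≡ w [MOD p ^ m]`. Since `ρ` is unique by regularity, `⟨τ_e⟩` determines `e` modulo
`p ^ m`.
-/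

open Equiv Subgroup

section Regular

variable {X : Type*} {N : Subgroup (Perm X)}

theorem IsRegularSubgroup.eq_of_apply_eq (hN : IsRegularSubgroup N) {η η' : Perm X}
    (hη : η ∈ N) (hη' : η' ∈ N) {x : X} (h : η x = η' x) : η = η' :=
  congrArg Subtype.val <|
    (hN x (η' x)).unique (y₁ := ⟨η, hη⟩) (y₂ := ⟨η', hη'⟩) h rfl

theorem isRegularSubgroup_of_card_eq [Finite X] (hcard : Nat.card N = Nat.card X)
    (hfree : ∀ η ∈ N, ∀ x, η x = x → η = 1) : IsRegularSubgroup N := by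
  intro x y
  have hinj : Function.Injective fun η : N => (η : Perm X) x := by
    rintro ⟨η, hη⟩ ⟨η', hη'⟩ h
    have := hfree _ (N.mul_mem (N.inv_mem hη') hη) x (by simp_all [Perm.mul_apply])
    exact Subtype.ext (inv_mul_eq_one.mp this).symm
  obtain ⟨η, hη⟩ := (hinj.bijective_of_nat_card_le hcard.ge).2 y
  exact ⟨η, hη, fun η' h' => hinj (h'.trans hη.symm)⟩

end Regular

section Holomorph

theorem addLamHom_apply {A : Type*} [AddGroup A] (t x : A) :
    addLamHom A (.ofAdd t) x = t + x := rfl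

theorem addLamHom_mul_mul_inv_apply {A : Type*} [AddGroup A] (t : A) (σ : Perm A) (x : A) :
    (addLamHom A (.ofAdd t) * σ * (addLamHom A (.ofAdd t))⁻¹) x = t + σ (-t + x) := by
  rw [← map_inv]; rfl

theorem map_add_sub_of_mem_HolA {A : Type*} [AddCommGroup A] {π : Perm A} (hπ : π ∈ HolA A)
    (g y : A) : π (g + y) - π 0 = (π g - π 0) + (π y - π 0) := by
  obtain ⟨g', hg'⟩ := (mem_normalizer_iff.mp hπ _).mp ⟨.ofAdd g, rfl⟩
  have key : ∀ z, π (g + z) = g'.toAdd + π z := fun z => by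
    have := Perm.ext_iff.mp hg' (π z)
    simp only [Perm.mul_apply, Perm.coe_inv, symm_apply_apply] at this
    exact this.symm
  have key₀ : π g = g'.toAdd + π 0 := by simpa using key 0
  rw [key, key₀]
  abel

theorem apply_eq_mul_add_of_mem_HolA {q : ℕ} [NeZero q] {π : Perm (ZMod q)}
    (hπ : π ∈ HolA (ZMod q)) (x : ZMod q) : π x = (π 1 - π 0) * x + π 0 := by
  let f : ZMod q →+ ZMod q := .mk' (fun y => π y - π 0) (map_add_sub_of_mem_HolA hπ)
  have hf : f x = x.val • f 1 := by rw [← map_nsmul, nsmul_one, ZMod.natCast_zmod_val]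
  rw [nsmul_eq_mul, ZMod.natCast_zmod_val] at hf
  simp only [f, AddMonoidHom.mk'_apply] at hf
  linear_combination hf

variable {R : Type*} [CommRing R] {π : Perm R} {a b : R}

theorem mul_addLamHom_mul_inv_of_affine (hπ : ∀ x, π x = a * x + b) (g : R) :
    π * addLamHom R (.ofAdd g) * π⁻¹ = addLamHom R (.ofAdd (a * g)) := by
  ext x
  have hx := hπ (π⁻¹ x)
  rw [Perm.coe_inv, apply_symm_apply] at hx
  simp only [Perm.mul_apply, addLamHom_apply, hπ]
  linear_combination -hx

theorem mem_HolA_of_affine [Finite R] (hπ : ∀ x, π x = a * x + b) : π ∈ HolA R :=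
  mem_normalizer_fintype <| by
    rintro _ ⟨g, rfl⟩
    exact ⟨_, (mul_addLamHom_mul_inv_of_affine hπ g.toAdd).symm⟩

theorem sub_one_sq_mul_eq_zero_of_commute_conj (hπ : ∀ x, π x = a * x + b) (t : R)
    (h : Commute π (addLamHom R (.ofAdd t) * π * (addLamHom R (.ofAdd t))⁻¹)) :
    (a - 1) ^ 2 * t = 0 := by
  have := Perm.ext_iff.mp h.eq 0
  rw [Perm.mul_apply, Perm.mul_apply (addLamHom R _ * π * _), addLamHom_mul_mul_inv_apply,
    addLamHom_mul_mul_inv_apply] at this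
  simp only [hπ] at this
  linear_combination -this

end Holomorph

section AffineFlow

variable {R : Type*} [CommRing R] [Invertible (2 : R)] {ε : R}

/-- The constant term interpolates `∑ i < s, (1 + ε) ^ i = s + ε * s * (s - 1) / 2`, so that
`affineFlow hε (.ofAdd s)` is the `s`-th power of `x ↦ (1 + ε) * x + 1`. -/
def affineFlowFun (ε s x : R) : R := (1 + s * ε) * x + s + ⅟2 * ε * s * (s - 1)

theorem affineFlowFun_zero (ε x : R) : affineFlowFun ε 0 x = x := by
  simp [affineFlowFun]

theorem affineFlowFun_add (hε : ε * ε = 0) (s r x : R) :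
    affineFlowFun ε s (affineFlowFun ε r x) = affineFlowFun ε (s + r) x := by
  unfold affineFlowFun
  linear_combination
    (s * r * x + ⅟2 * s * r * (r - 1)) * hε - ε * s * r * invOf_mul_self (2 : R)

def affineFlow (hε : ε * ε = 0) : Multiplicative R →* Perm R where
  toFun s :=
    { toFun := affineFlowFun ε s.toAdd
      invFun := affineFlowFun ε (-s.toAdd)
      left_inv x := by rw [affineFlowFun_add hε, neg_add_cancel, affineFlowFun_zero]
      right_inv x := by rw [affineFlowFun_add hε, add_neg_cancel, affineFlowFun_zero] }
  map_one' := Perm.ext (affineFlowFun_zero ε)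
  map_mul' s r := Perm.ext fun x => (affineFlowFun_add hε _ _ x).symm

variable (hε : ε * ε = 0)

theorem affineFlow_apply (s x : R) :
    affineFlow hε (.ofAdd s) x = (1 + s * ε) * x + s + ⅟2 * ε * s * (s - 1) := rfl

theorem affineFlow_ofAdd_one_apply (x : R) : affineFlow hε (.ofAdd 1) x = (1 + ε) * x + 1 := by
  rw [affineFlow_apply]; ring

theorem eq_zero_of_affineFlow_apply_eq_self {s x : R} (h : affineFlow hε (.ofAdd s) x = x) :
    s = 0 := by
  have hunit : IsUnit (1 + ε * (x + ⅟2 * (s - 1))) :=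
    IsNilpotent.isUnit_one_add ⟨2, by linear_combination (x + ⅟2 * (s - 1)) ^ 2 * hε⟩
  rw [affineFlow_apply] at h
  exact (hunit.mul_left_eq_zero).mp (by linear_combination h)

theorem affineFlow_injective : Function.Injective (affineFlow hε) :=
  (injective_iff_map_eq_one _).mpr fun s hs => toAdd_eq_zero.mp <|
    eq_zero_of_affineFlow_apply_eq_self hε (x := 0) (by rw [ofAdd_toAdd, hs]; rfl)

theorem addLamHom_mul_affineFlow_mul_inv (t s : R) :
    addLamHom R (.ofAdd t) * affineFlow hε (.ofAdd s) * (addLamHom R (.ofAdd t))⁻¹ =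
      affineFlow hε (.ofAdd (s * (1 - ε * t))) := by
  ext x
  rw [addLamHom_mul_mul_inv_apply, affineFlow_apply, affineFlow_apply]
  linear_combination (s * t * x - ⅟2 * s * t * (s * t * ε - 2 * s + 1)) * hε

theorem card_range_affineFlow : Nat.card (affineFlow hε).range = Nat.card R :=
  (Nat.card_congr (MonoidHom.ofInjective (affineFlow_injective hε)).toEquiv.symm).trans
    (Nat.card_congr Multiplicative.toAdd)

theorem isRegularSubgroup_range_affineFlow [Finite R] :
    IsRegularSubgroup (affineFlow hε).range :=
  isRegularSubgroup_of_card_eq (card_range_affineFlow hε) <| by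
    rintro _ ⟨s, rfl⟩ x hx
    obtain rfl : s = 1 := toAdd_eq_zero.mp (eq_zero_of_affineFlow_apply_eq_self hε hx)
    exact map_one _

theorem range_affineFlow_le_HolA [Finite R] : (affineFlow hε).range ≤ HolA R := by
  rintro _ ⟨s, rfl⟩
  rw [← ofAdd_toAdd s]
  exact mem_HolA_of_affine (a := 1 + s.toAdd * ε)
    (b := s.toAdd + ⅟2 * ε * s.toAdd * (s.toAdd - 1)) fun x => by rw [affineFlow_apply]; ring

theorem lamA_le_normalizer_range_affineFlow [Finite R] :
    lamA R ≤ normalizer ((affineFlow hε).range : Set (Perm R)) := by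
  rintro _ ⟨t, rfl⟩
  refine mem_normalizer_fintype ?_
  rintro _ ⟨s, rfl⟩
  rw [← ofAdd_toAdd t, ← ofAdd_toAdd s, addLamHom_mul_affineFlow_mul_inv]
  exact ⟨_, rfl⟩

end AffineFlow

theorem zpowers_affineFlow_ofAdd_one {q : ℕ} [NeZero q] [Invertible (2 : ZMod q)] {ε : ZMod q}
    (hε : ε * ε = 0) : zpowers (affineFlow hε (.ofAdd 1)) = (affineFlow hε).range := by
  rw [← MonoidHom.map_zpowers, MonoidHom.range_eq_map]
  congr 1
  refine eq_top_iff.mpr fun s _ => ?_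
  rw [← ofAdd_toAdd s, ← ZMod.natCast_zmod_val s.toAdd, ← nsmul_one, ofAdd_nsmul]
  exact pow_mem (mem_zpowers _) _

theorem zpowers_mem_SA_inter_RA {p n : ℕ} (hodd : Odd p) {τ : Perm (ZMod (p ^ n))}
    {ε : ZMod (p ^ n)} (hε : ε * ε = 0) (hτ : ∀ x, τ x = (1 + ε) * x + 1) :
    zpowers τ ∈ SA p n ∩ RA p n := by
  have : NeZero (p ^ n) := ⟨pow_ne_zero _ hodd.pos.ne'⟩
  have : Invertible (2 : ZMod (p ^ n)) := IsUnit.invertible <| by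
    simpa using (ZMod.isUnit_iff_coprime 2 _).mpr ((Nat.coprime_two_left.mpr hodd).pow_right n)
  have hτ_eq : τ = affineFlow hε (.ofAdd 1) :=
    Perm.ext fun x => by rw [hτ, affineFlow_ofAdd_one_apply]
  have hrange : zpowers τ = (affineFlow hε).range := by
    rw [hτ_eq, zpowers_affineFlow_ofAdd_one]
  have hreg : IsRegularSubgroup (zpowers τ) := hrange ▸ isRegularSubgroup_range_affineFlow hε
  have hcard : Nat.card (zpowers τ) = p ^ n := by
    rw [hrange, card_range_affineFlow, Nat.card_zmod]
  exact ⟨⟨hreg, inferInstance, hcard, hrange ▸ range_affineFlow_le_HolA hε⟩,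
    hreg, inferInstance, hcard, hrange ▸ lamA_le_normalizer_range_affineFlow hε⟩

theorem one_add_pow_of_mul_self_eq_zero {R : Type*} [CommRing R] {c : R} (hc : c * c = 0)
    (e : ℕ) : (1 + c) ^ e = 1 + e * c := by
  induction e with
  | zero => simp
  | succ e ih =>
    rw [pow_succ, ih]
    push_cast
    linear_combination (e : R) * hc

theorem prime_pow_sub_half_mul_self_eq_zero (p n : ℕ) :
    (p : ZMod (p ^ n)) ^ (n - n / 2) * (p : ZMod (p ^ n)) ^ (n - n / 2) = 0 := by
  rw [← pow_add, show n - n / 2 + (n - n / 2) = n + (n - 2 * (n / 2)) by omega, pow_add,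
    ← Nat.cast_pow, ZMod.natCast_self, zero_mul]

section PrimePowerModulus

variable {p n : ℕ}

theorem natCast_mul_prime_pow_eq_iff (hp : p ≠ 0) {k : ℕ} (hk : k ≤ n) (e e' : ℕ) :
    (e : ZMod (p ^ n)) * (p : ZMod (p ^ n)) ^ (n - k) = e' * (p : ZMod (p ^ n)) ^ (n - k) ↔
      e ≡ e' [MOD p ^ k] := by
  rw [← Nat.cast_pow, ← Nat.cast_mul, ← Nat.cast_mul, ZMod.natCast_eq_natCast_iff,
    show p ^ n = p ^ k * p ^ (n - k) by rw [← pow_add, Nat.add_sub_cancel' hk]]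
  exact Nat.ModEq.mul_right_cancel_iff' (pow_ne_zero _ hp)

theorem exists_eq_prime_pow_mul_of_sq_eq_zero (hp : p.Prime) {x : ZMod (p ^ n)} (hx : x ^ 2 = 0) :
    ∃ w, x = (p : ZMod (p ^ n)) ^ (n - n / 2) * w := by
  have : NeZero (p ^ n) := ⟨pow_ne_zero _ hp.ne_zero⟩
  obtain ⟨v, rfl⟩ : ∃ v : ℕ, (v : ZMod (p ^ n)) = x := ⟨x.val, ZMod.natCast_zmod_val x⟩
  rcases eq_or_ne v 0 with rfl | hv
  · exact ⟨0, by simp⟩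
  have hdvd : p ^ n ∣ v ^ 2 := (ZMod.natCast_eq_zero_iff _ _).mp (by push_cast; exact hx)
  rw [hp.pow_dvd_iff_le_factorization (pow_ne_zero _ hv), Nat.factorization_pow] at hdvd
  have hle : n - n / 2 ≤ v.factorization p := by
    simp only [Finsupp.smul_apply, smul_eq_mul] at hdvd
    omega
  obtain ⟨w, rfl⟩ := (hp.pow_dvd_iff_le_factorization hv).mpr hle
  exact ⟨w, by push_cast; ring⟩

theorem exists_lt_one_add_prime_pow_pow_eq (hp : p ≠ 0) (w : ZMod (p ^ n)) :
    ∃ e < p ^ (n / 2), 1 + (p : ZMod (p ^ n)) ^ (n - n / 2) * w =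
      (1 + (p : ZMod (p ^ n)) ^ (n - n / 2)) ^ e := by
  have : NeZero (p ^ n) := ⟨pow_ne_zero _ hp⟩
  refine ⟨w.val % p ^ (n / 2), Nat.mod_lt _ (pow_pos (Nat.pos_of_ne_zero hp) _), ?_⟩
  rw [one_add_pow_of_mul_self_eq_zero (prime_pow_sub_half_mul_self_eq_zero p n),
    (natCast_mul_prime_pow_eq_iff hp (Nat.div_le_self n 2) _ _).mpr (Nat.mod_modEq _ _),
    ZMod.natCast_zmod_val, mul_comm]

theorem one_add_prime_pow_pow_injOn (hp : p ≠ 0) :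
    Set.InjOn (fun e : ℕ => (1 + (p : ZMod (p ^ n)) ^ (n - n / 2)) ^ e)
      (Set.Iio (p ^ (n / 2))) := by
  intro e he e' he' h
  simp only [one_add_pow_of_mul_self_eq_zero (prime_pow_sub_half_mul_self_eq_zero p n),
    add_right_inj] at h
  exact ((natCast_mul_prime_pow_eq_iff hp (Nat.div_le_self n 2) e e').mp h).eq_of_lt_of_lt he he'

end PrimePowerModulus

theorem exists_affine_mem_of_mem_SA_inter_RA {p n : ℕ} (hp : p.Prime)
    {N : Subgroup (Perm (ZMod (p ^ n)))} (hN : N ∈ SA p n ∩ RA p n) :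
    ∃ ρ ∈ N, ∃ w : ZMod (p ^ n),
      ∀ x, ρ x = (1 + (p : ZMod (p ^ n)) ^ (n - n / 2) * w) * x + 1 := by
  obtain ⟨⟨hreg, hcyc, -, hHol⟩, -, -, -, hnorm⟩ := hN
  have : NeZero (p ^ n) := ⟨pow_ne_zero _ hp.ne_zero⟩
  obtain ⟨⟨ρ, hρN⟩, hρ0 : ρ 0 = 1, -⟩ := hreg 0 1
  have hρ : ∀ x, ρ x = (ρ 1 - ρ 0) * x + 1 := fun x => by
    rw [apply_eq_mul_add_of_mem_HolA (hHol hρN), hρ0]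
  set shift := addLamHom (ZMod (p ^ n)) (.ofAdd 1)
  have hconjN : shift * ρ * shift⁻¹ ∈ N :=
    (mem_normalizer_iff.mp (hnorm ⟨_, rfl⟩) ρ).mp hρN
  have hcomm : Commute ρ (shift * ρ * shift⁻¹) :=
    congrArg Subtype.val (IsMulCommutative.is_comm.comm (⟨ρ, hρN⟩ : N) ⟨_, hconjN⟩)
  obtain ⟨w, hw⟩ := exists_eq_prime_pow_mul_of_sq_eq_zero hp
    (by simpa using sub_one_sq_mul_eq_zero_of_commute_conj hρ 1 hcomm)
  exact ⟨ρ, hρN, w, fun x => by rw [hρ, ← hw]; ring⟩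

theorem SR_eq_tau_powers_general (p n : ℕ) (hp : p.Prime) (hodd : Odd p)
    (m : ℕ) (hm : m = n / 2)
    (τ : ℕ → Equiv.Perm (ZMod (p ^ n)))
    (hτ : ∀ e (x : ZMod (p ^ n)),
      τ e x = (1 + (p : ZMod (p ^ n)) ^ (n - m)) ^ e * x + 1) :
    SA p n ∩ RA p n = {N | ∃ e < p ^ m, N = Subgroup.zpowers (τ e)} ∧
    Set.InjOn (fun e => Subgroup.zpowers (τ e)) (Set.Iio (p ^ m)) ∧
    (SA p n ∩ RA p n).ncard = p ^ m := by
  subst hm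
  have : NeZero (p ^ n) := ⟨pow_ne_zero _ hp.ne_zero⟩
  set c : ZMod (p ^ n) := (p : ZMod (p ^ n)) ^ (n - n / 2)
  have hc : c * c = 0 := prime_pow_sub_half_mul_self_eq_zero p n
  have hmem (e : ℕ) : zpowers (τ e) ∈ SA p n ∩ RA p n :=
    zpowers_mem_SA_inter_RA hodd (ε := e * c) (by linear_combination (e * e : ZMod (p ^ n)) * hc)
      fun x => by rw [hτ, one_add_pow_of_mul_self_eq_zero hc]
  have hinj : Set.InjOn (fun e => zpowers (τ e)) (Set.Iio (p ^ (n / 2))) := by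
    intro e he e' he' h
    have hτe : τ e = τ e' := (hmem e).1.1.eq_of_apply_eq (mem_zpowers _)
      ((congrArg (τ e' ∈ ·) h).mpr (mem_zpowers _)) (x := 0) (by simp [hτ])
    refine one_add_prime_pow_pow_injOn hp.ne_zero he he' ?_
    simpa [hτ] using Perm.ext_iff.mp hτe 1
  have hset : SA p n ∩ RA p n = (fun e => zpowers (τ e)) '' Set.Iio (p ^ (n / 2)) := by
    refine Set.Subset.antisymm (fun N hN => ?_) (Set.image_subset_iff.mpr fun e _ => hmem e)
    obtain ⟨ρ, hρN, w, hρ⟩ := exists_affine_mem_of_mem_SA_inter_RA hp hN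
    obtain ⟨e, he, hew⟩ := exists_lt_one_add_prime_pow_pow_eq hp.ne_zero w
    have hρτ : ρ = τ e := Perm.ext fun x => by rw [hρ, hτ, hew]
    refine ⟨e, he, eq_of_le_of_card_ge (zpowers_le.mpr (hρτ ▸ hρN)) ?_⟩
    rw [hN.1.2.2.1, (hmem e).1.2.2.1]
  refine ⟨?_, hinj, ?_⟩
  · rw [hset]
    ext N
    simp [eq_comm]
  · rw [hset, hinj.ncard_image, Set.ncard_Iio_nat]

/-- For `p` an odd prime and `τ_e : x ↦ uᵉ·x + 1` with `u = 1 + p^(n-m)`, `m = ⌊n/2⌋`: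
`S(G) ∩ R(G) = {⟨τ_e⟩ : 0 ≤ e < pᵐ}`, the map `e ↦ ⟨τ_e⟩` is injective on
`{0, …, pᵐ - 1}`, and `|S(G) ∩ R(G)| = pᵐ`. -/
theorem SR_eq_tau_powers (p n : ℕ) (hp : p.Prime) (hodd : Odd p) (hn : 1 ≤ n)
    (m : ℕ) (hm : m = n / 2)
    (τ : ℕ → Equiv.Perm (ZMod (p ^ n)))
    (hτ : ∀ e (x : ZMod (p ^ n)),
      τ e x = (1 + (p : ZMod (p ^ n)) ^ (n - m)) ^ e * x + 1) :
    SA p n ∩ RA p n = {N | ∃ e < p ^ m, N = Subgroup.zpowers (τ e)} ∧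
    Set.InjOn (fun e => Subgroup.zpowers (τ e)) (Set.Iio (p ^ m)) ∧
    (SA p n ∩ RA p n).ncard = p ^ m :=
  SR_eq_tau_powers_general p n hp hodd m hm τ hτ
end

section
/- Let n ≥ 3 be odd and let G = D_n be the dihedral group of order 2n. Then Q(G) = H(G). -/
open Equiv Pointwise

/-!
Let `M ∈ Q(Dₙ)`. The right regular representation `ρ(Dₙ)` lies in `S ∩ R`, so `M` is normalized
by both `λ(Dₙ)` and `ρ(Dₙ)`. Each `f ∈ M ≤ Hol` has the form `z ↦ f 1 · σ z` with `σ` an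
automorphism of `Dₙ`, i.e. an affine map `r j ↦ r (c j)`, `sr i ↦ sr (d + c i)`. The commutators of
`f` with `λ(x)` and `ρ(x)` for `x = r 1, sr 0` are translations `λ(r v)`, `ρ(r v)` lying in `M`.
The admissible `v` form two ideals of `ZMod n` that meet trivially, because for odd `n` no
nontrivial rotation is central; this determines `c` and `d` from `f 1` and a single parameter `a`.
The resulting formula for the action of `M` is respected by every automorphism of `Dₙ`, so
`Hol = λ(Dₙ) · Aut(Dₙ)` normalizes `M`, and `Norm(M) = Hol` follows by counting:
`|Norm(M)| ≤ |Dₙ| |Aut M| = |Dₙ| |Aut Dₙ| ≤ |Hol|`. The inclusion `H(G) ⊆ Q(G)` holds for every `G`.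
-/

section Holomorph

variable {G : Type*} [Group G]

abbrev leftReg (G : Type*) [Group G] : G →* Perm G := MulAction.toPermHom G G

def rightReg (G : Type*) [Group G] : G →* Perm G where
  toFun u := Equiv.mulRight u⁻¹
  map_one' := by ext; simp
  map_mul' u v := by ext; simp [mul_assoc]

@[simp] lemma leftReg_apply (g z : G) : leftReg G g z = g * z := rfl

@[simp] lemma rightReg_apply (u z : G) : rightReg G u z = z * u⁻¹ := rfl

@[simp] lemma leftReg_inv_apply (g z : G) : (leftReg G g)⁻¹ z = g⁻¹ * z := by
  rw [← map_inv]; rfl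

@[simp] lemma rightReg_inv_apply (u z : G) : (rightReg G u)⁻¹ z = z * u := by
  rw [← map_inv, rightReg_apply, inv_inv]

lemma leftReg_mem_lamG (g : G) : leftReg G g ∈ lamG G := ⟨g, rfl⟩

lemma lamG_le_Hol : lamG G ≤ Hol G := Subgroup.le_normalizer

lemma mem_Hol_of_conj_leftReg {f : Perm G} (φ : MulAut G)
    (h : ∀ g, f * leftReg G g * f⁻¹ = leftReg G (φ g)) : f ∈ Hol G := by
  have hcomp : (MulAut.conj f : Perm G →* Perm G).comp (leftReg G) =
      (leftReg G).comp φ.toMonoidHom :=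
    MonoidHom.ext h
  rw [Hol, Subgroup.mem_normalizer_iff_map_conj_eq, lamG, MonoidHom.map_range, hcomp,
    MonoidHom.range_comp, MonoidHom.range_eq_top_of_surjective _ φ.surjective,
    ← MonoidHom.range_eq_map]

lemma commute_leftReg_rightReg (g u : G) : Commute (leftReg G g) (rightReg G u) := by
  ext z; simp [mul_assoc]

lemma rightReg_mem_Hol (u : G) : rightReg G u ∈ Hol G := by
  refine Subgroup.centralizer_le_normalizer _ (Subgroup.mem_centralizer_iff.mpr ?_)
  rintro _ ⟨g, rfl⟩
  exact commute_leftReg_rightReg g u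

lemma mulAut_mem_Hol (φ : MulAut G) : φ.toEquiv ∈ Hol G :=
  mem_Hol_of_conj_leftReg φ fun g => by ext; simp [Perm.inv_def]

lemma map_mul_of_mem_Hol_of_map_one {f : Perm G} (hf : f ∈ Hol G) (h1 : f 1 = 1) (a b : G) :
    f (a * b) = f a * f b := by
  obtain ⟨c, hc⟩ := (Subgroup.mem_normalizer_iff.mp hf (leftReg G a)).mp (leftReg_mem_lamG a)
  have hconj (z : G) : c * f z = f (a * z) := by
    simpa [Perm.inv_def] using DFunLike.congr_fun hc (f z)
  have hc1 : c = f a := by simpa [h1] using hconj 1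
  rw [← hconj, hc1]

lemma exists_mulAut_of_mem_Hol {f : Perm G} (hf : f ∈ Hol G) :
    ∃ φ : MulAut G, f = leftReg G (f 1) * φ.toEquiv := by
  set ψ := (leftReg G (f 1))⁻¹ * f with hψ
  have hψHol : ψ ∈ Hol G := mul_mem (inv_mem (lamG_le_Hol (leftReg_mem_lamG _))) hf
  have hψ1 : ψ 1 = 1 := by simp [hψ]
  refine ⟨{ ψ with map_mul' := map_mul_of_mem_Hol_of_map_one hψHol hψ1 }, ?_⟩
  ext z
  simp [hψ]

namespace IsRegularSubgroup

variable {X : Type*} {N : Subgroup (Perm X)}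

lemma exists_mem_apply_eq (hN : IsRegularSubgroup N) (x y : X) : ∃ p ∈ N, p x = y :=
  let ⟨p, hp⟩ := (hN x y).exists
  ⟨p, p.2, hp⟩

lemma eq_of_apply_eq_s19 (hN : IsRegularSubgroup N) {p q : Perm X} (hp : p ∈ N) (hq : q ∈ N)
    {x : X} (h : p x = q x) : p = q :=
  congrArg Subtype.val ((hN x (q x)).unique (y₁ := ⟨p, hp⟩) (y₂ := ⟨q, hq⟩) h rfl)

lemma mem_center_of_leftReg_mem_of_rightReg_mem {N : Subgroup (Perm G)}
    (hN : IsRegularSubgroup N) {v : G} (hl : leftReg G v ∈ N) (hr : rightReg G v ∈ N) :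
    v ∈ Subgroup.center G := by
  have h : leftReg G v = (rightReg G v)⁻¹ :=
    hN.eq_of_apply_eq_s19 hl (inv_mem hr) (x := 1) (by simp)
  exact Subgroup.mem_center_iff.mpr fun z => by simpa using (DFunLike.congr_fun h z).symm

lemma eq_one_of_commute (hN : IsRegularSubgroup N) {θ : Perm X} {x : X} (hθ : θ x = x)
    (hcomm : ∀ p ∈ N, θ * p = p * θ) : θ = 1 := by
  ext z
  obtain ⟨p, hp, rfl⟩ := hN.exists_mem_apply_eq x z
  simpa [hθ] using DFunLike.congr_fun (hcomm p hp) x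

lemma card_normalizer_le [Finite G] {N : Subgroup (Perm G)} (hN : IsRegularSubgroup N) :
    Nat.card (Subgroup.normalizer (N : Set (Perm G))) ≤ Nat.card G * Nat.card (MulAut N) := by
  rw [← Nat.card_prod]
  refine Nat.card_le_card_of_injective (fun f => ((f : Perm G) 1, N.normalizerMonoidHom f)) ?_
  rintro ⟨f, hf⟩ ⟨f', hf'⟩ h
  simp only [Prod.mk.injEq] at h
  obtain ⟨h1, hconj⟩ := h
  suffices f'⁻¹ * f = 1 from Subtype.ext (inv_mul_eq_one.mp this).symm
  refine hN.eq_one_of_commute (x := 1) (by simp [h1]) fun p hp => ?_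
  have hp' : f * p * f⁻¹ = f' * p * f'⁻¹ := by
    simpa using congrArg Subtype.val (DFunLike.congr_fun hconj ⟨p, hp⟩)
  calc f'⁻¹ * f * p = f'⁻¹ * (f * p * f⁻¹) * f := by group
    _ = p * (f'⁻¹ * f) := by rw [hp']; group

end IsRegularSubgroup

lemma card_mul_card_mulAut_le_card_Hol [Finite G] :
    Nat.card G * Nat.card (MulAut G) ≤ Nat.card (Hol G) := by
  rw [← Nat.card_prod]
  refine Nat.card_le_card_of_injective (fun gφ => ⟨leftReg G gφ.1 * gφ.2.toEquiv,
    mul_mem (lamG_le_Hol (leftReg_mem_lamG _)) (mulAut_mem_Hol _)⟩) ?_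
  rintro ⟨g, φ⟩ ⟨g', φ'⟩ h
  have h' : leftReg G g * φ.toEquiv = leftReg G g' * φ'.toEquiv := congrArg Subtype.val h
  have hg : g = g' := by simpa using DFunLike.congr_fun h' 1
  subst hg
  have hφ := mul_left_cancel h'
  exact Prod.ext rfl (MulEquiv.ext fun z => DFunLike.congr_fun hφ z)

lemma normalizer_eq_Hol_of_Hol_le [Finite G] {N : Subgroup (Perm G)} (hN : IsRegularSubgroup N)
    (e : N ≃* G) (h : Hol G ≤ Subgroup.normalizer (N : Set (Perm G))) :
    Subgroup.normalizer (N : Set (Perm G)) = Hol G := by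
  refine (Subgroup.eq_of_le_of_card_ge h ?_).symm
  calc Nat.card (Subgroup.normalizer (N : Set (Perm G)))
      ≤ Nat.card G * Nat.card (MulAut N) := hN.card_normalizer_le
    _ = Nat.card G * Nat.card (MulAut G) := by rw [Nat.card_congr (MulAut.congr e).toEquiv]
    _ ≤ Nat.card (Hol G) := card_mul_card_mulAut_le_card_Hol

lemma rightReg_injective : Function.Injective (rightReg G) := fun u v h => by
  simpa using DFunLike.congr_fun h 1

lemma isRegularSubgroup_range_rightReg : IsRegularSubgroup (rightReg G).range := by
  intro x y
  refine ⟨⟨rightReg G (y⁻¹ * x), _, rfl⟩, by simp only [rightReg_apply]; group, ?_⟩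
  rintro ⟨_, u, rfl⟩ hu
  simp only [rightReg_apply] at hu
  subst hu
  exact Subtype.ext (congrArg _ (by group))

lemma range_rightReg_le_Hol : (rightReg G).range ≤ Hol G := by
  rintro _ ⟨u, rfl⟩
  exact rightReg_mem_Hol u

lemma lamG_le_normalizer_range_rightReg :
    lamG G ≤ Subgroup.normalizer ((rightReg G).range : Set (Perm G)) := by
  rintro _ ⟨g, rfl⟩
  refine Subgroup.centralizer_le_normalizer _ (Subgroup.mem_centralizer_iff.mpr ?_)
  rintro _ ⟨u, rfl⟩
  exact (commute_leftReg_rightReg g u).symm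

lemma range_rightReg_mem_SClass_inter_RClass : (rightReg G).range ∈ SClass G ∩ RClass G :=
  have e : Nonempty ((rightReg G).range ≃* G) :=
    ⟨(MonoidHom.ofInjective rightReg_injective).symm⟩
  ⟨⟨isRegularSubgroup_range_rightReg, e, range_rightReg_le_Hol⟩,
    ⟨isRegularSubgroup_range_rightReg, e, lamG_le_normalizer_range_rightReg⟩⟩

lemma HClass_subset_QClass : HClass G ⊆ QClass G := by
  rintro M ⟨hreg, e, hnorm⟩
  refine ⟨⟨⟨hreg, e, hnorm ▸ Subgroup.le_normalizer⟩, ⟨hreg, e, hnorm ▸ lamG_le_Hol⟩⟩, ?_⟩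
  rintro N ⟨⟨-, -, hN⟩, -⟩
  exact hnorm ▸ hN

end Holomorph

section Commutators

variable {G : Type*} [Group G] {M : Subgroup (Perm G)} {f : Perm G} {g : G} {φ : MulAut G}

lemma leftReg_mem_of_mem_normalizer (hf : f ∈ M) (hφ : f = leftReg G g * φ.toEquiv) {x : G}
    (hx : leftReg G x ∈ Subgroup.normalizer (M : Set (Perm G))) :
    leftReg G (x * g * (φ x)⁻¹ * g⁻¹) ∈ M := by
  have h : leftReg G (x * g * (φ x)⁻¹ * g⁻¹) = leftReg G x * f * (leftReg G x)⁻¹ * f⁻¹ := by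
    subst hφ
    ext z
    simp [Perm.inv_def, mul_assoc]
  rw [h]
  exact mul_mem ((Subgroup.mem_normalizer_iff.mp hx f).mp hf) (inv_mem hf)

lemma rightReg_mem_of_mem_normalizer (hf : f ∈ M) (hφ : f = leftReg G g * φ.toEquiv) {x : G}
    (hx : rightReg G x ∈ Subgroup.normalizer (M : Set (Perm G))) :
    rightReg G (x * (φ x)⁻¹) ∈ M := by
  have h : rightReg G (x * (φ x)⁻¹) = rightReg G x * f * (rightReg G x)⁻¹ * f⁻¹ := by
    subst hφ
    ext z
    simp only [Perm.mul_apply, mul_inv_rev, rightReg_apply, rightReg_inv_apply, leftReg_inv_apply]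
    simp [Perm.inv_def, mul_assoc]
  rw [h]
  exact mul_mem ((Subgroup.mem_normalizer_iff.mp hx f).mp hf) (inv_mem hf)

end Commutators

lemma Ideal.eq_of_sub_mem_of_inf_eq_bot {R : Type*} [CommRing R] {I J : Ideal R} (h : I ⊓ J = ⊥)
    {x y : R} (hI : x - y ∈ I) (hJ : x - y ∈ J) : x = y := by
  have hxy : x - y ∈ I ⊓ J := ⟨hI, hJ⟩
  rwa [h, Ideal.mem_bot, sub_eq_zero] at hxy

namespace DihedralGroup

variable {n : ℕ}

def affine (c d : ZMod n) : DihedralGroup n → DihedralGroup n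
  | r j => r (c * j)
  | sr i => sr (d + c * i)

lemma exists_affine_of_mulAut (hodd : Odd n) (φ : MulAut (DihedralGroup n)) :
    ∃ c d : ZMod n, ⇑φ = affine c d := by
  have : NeZero n := ⟨hodd.pos.ne'⟩
  obtain ⟨c, hc⟩ : ∃ c, φ (r 1) = r c := by
    rcases hx : φ (r 1) with c | c
    · exact ⟨c, rfl⟩
    · have h := MulEquiv.orderOf_eq φ (r 1)
      rw [hx, orderOf_sr, orderOf_r_one] at h
      exact absurd (h ▸ hodd) (by decide)
  obtain ⟨d, hd⟩ : ∃ d, φ (sr 0) = sr d := by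
    rcases hx : φ (sr 0) with b | d
    · have hsq : r (b + b) = r 0 := by
        rw [← r_mul_r, ← hx, ← map_mul, sr_mul_self, map_one, one_def]
      have hb : b = 0 := (ZMod.add_self_eq_zero_iff_eq_zero hodd).mp (r.inj hsq)
      rw [hb, r_zero, map_eq_one_iff _ φ.injective] at hx
      exact absurd (hx.trans one_def) (by simp only [reduceCtorEq, not_false_eq_true])
    · exact ⟨d, rfl⟩
  have hr (j : ZMod n) : φ (r j) = r (c * j) := by
    rw [← ZMod.natCast_zmod_val j, ← r_one_pow, map_pow, hc, r_pow, mul_comm]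
  refine ⟨c, d, funext fun x => ?_⟩
  rcases x with j | i
  · exact hr j
  · show φ (sr i) = sr (d + c * i)
    rw [← zero_add i, ← sr_mul_r, map_mul, hd, hr, sr_mul_r, zero_add]

lemma eq_zero_of_r_mem_center (hodd : Odd n) {v : ZMod n}
    (h : r v ∈ Subgroup.center (DihedralGroup n)) : v = 0 := by
  have hcomm := Subgroup.mem_center_iff.mp h (sr 0)
  rw [sr_mul_r, r_mul_sr, zero_sub, zero_add] at hcomm
  exact (ZMod.add_self_eq_zero_iff_eq_zero hodd).mp (by linear_combination sr.inj hcomm)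

def rotationIdeal {K : Type*} [Group K] (ρ : DihedralGroup n →* K) (M : Subgroup K) :
    Ideal (ZMod n) where
  carrier := {v | ρ (r v) ∈ M}
  add_mem' {v w} hv hw := by
    simpa only [Set.mem_ofPred_eq, ← r_mul_r, map_mul] using mul_mem hv hw
  zero_mem' := by simp only [Set.mem_ofPred_eq, r_zero, map_one, one_mem]
  smul_mem' c v (hv : ρ (r v) ∈ M) := by
    change ρ (r (c * v)) ∈ M
    rw [mul_comm, ← ZMod.intCast_zmod_cast c, ← r_zpow, map_zpow]
    exact zpow_mem hv _

@[simp] lemma mem_rotationIdeal {K : Type*} [Group K] {ρ : DihedralGroup n →* K} {M : Subgroup K}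
    {v : ZMod n} : v ∈ rotationIdeal ρ M ↔ ρ (r v) ∈ M := Iff.rfl

lemma rotationIdeal_inf_eq_bot (hodd : Odd n) {M : Subgroup (Perm (DihedralGroup n))}
    (hM : IsRegularSubgroup M) :
    rotationIdeal (leftReg _) M ⊓ rotationIdeal (rightReg _) M = ⊥ :=
  eq_bot_iff.mpr fun _ ⟨hl, hr⟩ =>
    eq_zero_of_r_mem_center hodd (hM.mem_center_of_leftReg_mem_of_rightReg_mem hl hr)

def regularAction (a : ZMod n) : DihedralGroup n → DihedralGroup n → DihedralGroup n
  | r m, r k => r (m + k)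
  | r m, sr i => sr (i - a * m)
  | sr m, r k => sr (m + a * k)
  | sr m, sr i => r (a * (i - m))

lemma affine_regularAction (a c d : ZMod n) (g z : DihedralGroup n) :
    affine c d (regularAction a g z) = regularAction a (affine c d g) (affine c d z) := by
  rcases g with m | m <;> rcases z with k | k <;> simp only [affine, regularAction] <;>
    congr 1 <;> ring

section RegularSubgroup

variable {M : Subgroup (Perm (DihedralGroup n))} {f : Perm (DihedralGroup n)}
  {φ : MulAut (DihedralGroup n)} {c d : ZMod n}

lemma one_sub_mem_and_mem_rotationIdeal_rightReg
    (hrho : (rightReg _).range ≤ Subgroup.normalizer (M : Set (Perm (DihedralGroup n))))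
    {g : DihedralGroup n} (hf : f ∈ M) (hφ : f = leftReg _ g * φ.toEquiv)
    (haff : ⇑φ = affine c d) :
    1 - c ∈ rotationIdeal (rightReg _) M ∧ d ∈ rotationIdeal (rightReg _) M := by
  have h1 := rightReg_mem_of_mem_normalizer hf hφ (hrho ⟨r 1, rfl⟩)
  have h2 := rightReg_mem_of_mem_normalizer hf hφ (hrho ⟨sr 0, rfl⟩)
  simp only [haff, affine, inv_r, inv_sr, r_mul_r, sr_mul_sr] at h1 h2
  rw [mem_rotationIdeal, mem_rotationIdeal]
  exact ⟨by convert h1 using 3; ring, by convert h2 using 3; ring⟩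

lemma one_sub_mem_and_sub_mem_rotationIdeal_leftReg_of_r
    (hlam : lamG _ ≤ Subgroup.normalizer (M : Set (Perm (DihedralGroup n))))
    {m : ZMod n} (hf : f ∈ M) (hφ : f = leftReg _ (r m) * φ.toEquiv) (haff : ⇑φ = affine c d) :
    1 - c ∈ rotationIdeal (leftReg _) M ∧ d - 2 * m ∈ rotationIdeal (leftReg _) M := by
  have h1 := leftReg_mem_of_mem_normalizer hf hφ (hlam (leftReg_mem_lamG (r 1)))
  have h2 := leftReg_mem_of_mem_normalizer hf hφ (hlam (leftReg_mem_lamG (sr 0)))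
  simp only [haff, affine, inv_r, inv_sr, r_mul_r, sr_mul_r, sr_mul_sr] at h1 h2
  rw [mem_rotationIdeal, mem_rotationIdeal]
  exact ⟨by convert h1 using 3; ring, by convert h2 using 3; ring⟩

lemma one_add_mem_and_sub_mem_rotationIdeal_leftReg_of_sr
    (hlam : lamG _ ≤ Subgroup.normalizer (M : Set (Perm (DihedralGroup n))))
    {m : ZMod n} (hf : f ∈ M) (hφ : f = leftReg _ (sr m) * φ.toEquiv) (haff : ⇑φ = affine c d) :
    1 + c ∈ rotationIdeal (leftReg _) M ∧ 2 * m - d ∈ rotationIdeal (leftReg _) M := by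
  have h1 := leftReg_mem_of_mem_normalizer hf hφ (hlam (leftReg_mem_lamG (r 1)))
  have h2 := leftReg_mem_of_mem_normalizer hf hφ (hlam (leftReg_mem_lamG (sr 0)))
  simp only [haff, affine, inv_r, inv_sr, sr_mul_r, sr_mul_sr, r_mul_sr] at h1 h2
  rw [mem_rotationIdeal, mem_rotationIdeal]
  exact ⟨by convert h1 using 3; ring, by convert h2 using 3; ring⟩

lemma coeffs_eq_of_r
    (hsep : rotationIdeal (leftReg _) M ⊓ rotationIdeal (rightReg _) M = ⊥)
    (hlam : lamG _ ≤ Subgroup.normalizer (M : Set (Perm (DihedralGroup n))))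
    (hrho : (rightReg _).range ≤ Subgroup.normalizer (M : Set (Perm (DihedralGroup n))))
    {a : ZMod n} (ha : a + 1 ∈ rotationIdeal (leftReg _) M)
    (ha' : a - 1 ∈ rotationIdeal (rightReg _) M)
    {m : ZMod n} (hf : f ∈ M) (hφ : f = leftReg _ (r m) * φ.toEquiv)
    (haff : ⇑φ = affine c d) : c = 1 ∧ d = (1 - a) * m := by
  obtain ⟨hcl, hdl⟩ := one_sub_mem_and_sub_mem_rotationIdeal_leftReg_of_r hlam hf hφ haff
  obtain ⟨hcr, hdr⟩ := one_sub_mem_and_mem_rotationIdeal_rightReg hrho hf hφ haff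
  refine ⟨(Ideal.eq_of_sub_mem_of_inf_eq_bot hsep hcl hcr).symm,
    Ideal.eq_of_sub_mem_of_inf_eq_bot hsep ?_ ?_⟩
  · convert add_mem hdl (Ideal.mul_mem_left _ m ha) using 1; ring
  · convert add_mem hdr (Ideal.mul_mem_left _ m ha') using 1; ring

lemma coeffs_eq_of_sr
    (hsep : rotationIdeal (leftReg _) M ⊓ rotationIdeal (rightReg _) M = ⊥)
    (hlam : lamG _ ≤ Subgroup.normalizer (M : Set (Perm (DihedralGroup n))))
    (hrho : (rightReg _).range ≤ Subgroup.normalizer (M : Set (Perm (DihedralGroup n))))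
    {a : ZMod n} (ha : a + 1 ∈ rotationIdeal (leftReg _) M)
    (ha' : a - 1 ∈ rotationIdeal (rightReg _) M)
    {m : ZMod n} (hf : f ∈ M) (hφ : f = leftReg _ (sr m) * φ.toEquiv)
    (haff : ⇑φ = affine c d) : c = a ∧ d = (1 - a) * m := by
  obtain ⟨hcl, hdl⟩ := one_add_mem_and_sub_mem_rotationIdeal_leftReg_of_sr hlam hf hφ haff
  obtain ⟨hcr, hdr⟩ := one_sub_mem_and_mem_rotationIdeal_rightReg hrho hf hφ haff
  refine ⟨(Ideal.eq_of_sub_mem_of_inf_eq_bot hsep ?_ ?_).symm,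
    Ideal.eq_of_sub_mem_of_inf_eq_bot hsep ?_ ?_⟩
  · convert sub_mem ha hcl using 1; ring
  · convert add_mem ha' hcr using 1; ring
  · convert sub_mem (Ideal.mul_mem_left _ m ha) hdl using 1; ring
  · convert add_mem hdr (Ideal.mul_mem_left _ m ha') using 1; ring

lemma apply_eq_regularAction (hodd : Odd n) (hreg : IsRegularSubgroup M) (hS : M ≤ Hol _)
    (hlam : lamG _ ≤ Subgroup.normalizer (M : Set (Perm (DihedralGroup n))))
    (hrho : (rightReg _).range ≤ Subgroup.normalizer (M : Set (Perm (DihedralGroup n))))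
    {a : ZMod n} (ha : a + 1 ∈ rotationIdeal (leftReg _) M)
    (ha' : a - 1 ∈ rotationIdeal (rightReg _) M) (hf : f ∈ M) (z : DihedralGroup n) :
    f z = regularAction a (f 1) z := by
  have hsep := rotationIdeal_inf_eq_bot hodd hreg
  obtain ⟨φ, hφ⟩ := exists_mulAut_of_mem_Hol (hS hf)
  obtain ⟨c, d, haff⟩ := exists_affine_of_mulAut hodd φ
  have hfz : f z = f 1 * affine c d z := by
    conv_lhs => rw [hφ]
    simp [haff]
  generalize f 1 = g at hφ hfz ⊢
  rw [hfz]
  rcases g with m | m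
  · obtain ⟨rfl, rfl⟩ := coeffs_eq_of_r hsep hlam hrho ha ha' hf hφ haff
    rcases z with k | i <;> simp only [affine, regularAction, r_mul_r, r_mul_sr] <;>
      congr 1 <;> ring
  · obtain ⟨rfl, rfl⟩ := coeffs_eq_of_sr hsep hlam hrho ha ha' hf hφ haff
    rcases z with k | i <;> simp only [affine, regularAction, sr_mul_r, sr_mul_sr]
    congr 1; ring

lemma exists_add_one_mem_and_sub_one_mem_rotationIdeal (hodd : Odd n)
    (hreg : IsRegularSubgroup M) (hS : M ≤ Hol _)
    (hlam : lamG _ ≤ Subgroup.normalizer (M : Set (Perm (DihedralGroup n))))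
    (hrho : (rightReg _).range ≤ Subgroup.normalizer (M : Set (Perm (DihedralGroup n)))) :
    ∃ a : ZMod n, a + 1 ∈ rotationIdeal (leftReg _) M ∧ a - 1 ∈ rotationIdeal (rightReg _) M := by
  obtain ⟨f, hf, hf1⟩ := hreg.exists_mem_apply_eq 1 (sr 0)
  obtain ⟨φ, hφ⟩ := exists_mulAut_of_mem_Hol (hS hf)
  rw [hf1] at hφ
  obtain ⟨c, d, haff⟩ := exists_affine_of_mulAut hodd φ
  refine ⟨c, ?_, ?_⟩
  · rw [add_comm]
    exact (one_add_mem_and_sub_mem_rotationIdeal_leftReg_of_sr hlam hf hφ haff).1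
  · rw [← neg_sub]
    exact neg_mem (one_sub_mem_and_mem_rotationIdeal_rightReg hrho hf hφ haff).1

lemma Hol_le_normalizer (hodd : Odd n) (hreg : IsRegularSubgroup M) (hS : M ≤ Hol _)
    (hlam : lamG _ ≤ Subgroup.normalizer (M : Set (Perm (DihedralGroup n))))
    (hrho : (rightReg _).range ≤ Subgroup.normalizer (M : Set (Perm (DihedralGroup n)))) :
    Hol _ ≤ Subgroup.normalizer (M : Set (Perm (DihedralGroup n))) := by
  have : NeZero n := ⟨hodd.pos.ne'⟩
  obtain ⟨a, ha, ha'⟩ := exists_add_one_mem_and_sub_one_mem_rotationIdeal hodd hreg hS hlam hrho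
  have hact {p} (hp : p ∈ M) := apply_eq_regularAction hodd hreg hS hlam hrho ha ha' hp
  intro f hf
  obtain ⟨φ, hφ⟩ := exists_mulAut_of_mem_Hol hf
  rw [hφ]
  refine mul_mem (hlam (leftReg_mem_lamG _)) (Subgroup.mem_normalizer_fintype fun p hp => ?_)
  obtain ⟨c, d, haff⟩ := exists_affine_of_mulAut hodd φ
  obtain ⟨q, hq, hq1⟩ := hreg.exists_mem_apply_eq 1 (φ (p 1))
  suffices φ.toEquiv * p * φ.toEquiv⁻¹ = q from this ▸ hq
  ext z
  obtain ⟨w, rfl⟩ := φ.surjective z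
  calc (φ.toEquiv * p * φ.toEquiv⁻¹) (φ w) = φ (p w) := by simp [Perm.inv_def]
    _ = φ (regularAction a (p 1) w) := by rw [hact hp w]
    _ = regularAction a (φ (p 1)) (φ w) := by rw [haff, affine_regularAction]
    _ = q (φ w) := by rw [← hq1, ← hact hq]

end RegularSubgroup

lemma QClass_subset_HClass (hodd : Odd n) :
    QClass (DihedralGroup n) ⊆ HClass (DihedralGroup n) := by
  rintro M ⟨⟨⟨hreg, ⟨e⟩, hS⟩, ⟨-, -, hlam⟩⟩, hQ⟩
  have : NeZero n := ⟨hodd.pos.ne'⟩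
  have hrho := hQ _ range_rightReg_mem_SClass_inter_RClass
  exact ⟨hreg, ⟨e⟩, normalizer_eq_Hol_of_Hol_le hreg e (Hol_le_normalizer hodd hreg hS hlam hrho)⟩

end DihedralGroup

theorem QClass_eq_HClass_dihedral_general (n : ℕ) (hodd : Odd n) :
    QClass (DihedralGroup n) = HClass (DihedralGroup n) :=
  (DihedralGroup.QClass_subset_HClass hodd).antisymm HClass_subset_QClass

/-- For `n ≥ 3` odd and `G = Dₙ` the dihedral group of order `2n`, `Q(G) = H(G)`. -/
theorem QClass_eq_HClass_dihedral (n : ℕ) (hn : 3 ≤ n) (hodd : Odd n) :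
    QClass (DihedralGroup n) = HClass (DihedralGroup n) :=
  QClass_eq_HClass_dihedral_general n hodd
end
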